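/- Let N ≥ 1 be an integer and 1 < p < 2. Suppose (q_n) is a sequence of reals with q_n > p and q_n → ∞, and for each n let v_n be a radial Neumann solution with exponent q_n satisfying the high-energy condition E_{q_n}(v_n) := ∫_0^1 r^{N−1}( v_n'(r)^p/p + v_n(r)^p/p − v_n(r)^{q_n}/q_n ) dr > (1/p − 1/q_n)·(1/N). Then E_{q_n}(v_n) → 1/(pN) as n → ∞. -/

import Mathlib

/-!
Integrating the equation against `1` and against `v` gives
`∫ r^{N-1} v^{q-1} = ∫ r^{N-1} v^{p-1}` and the Nehari identity, so
`E_q(v) = (1/p - 1/q) ∫ r^{N-1} v^q ≤ (1/p - 1/q) v(1)^p / N`, as `v` is nondecreasing.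
Integrating the equation from `0` to `r` also gives `v' ≤ v(1)`, hence `v(r) ≥ v(1) r`;
comparing `∫ r^{N-1} v^{q-1}` with `∫ r^{N-1} (v(1) r)^{q-1}` yields `v(1)^{q-p} ≤ (N+q-1)/N`.
Since also `v(1) ≥ 1`, this forces `v(1) → 1` as `q → ∞`, and the energy is squeezed between
the high-energy bound and `(1/p - 1/q) v(1)^p / N`.
-/

open Real Set Filter intervalIntegral

/-- `v : [0,1] → ℝ` is a radial Neumann solution with exponent `q` of
`-Δ_p v + v^{p-1} = v^{q-1}` in the unit ball of `ℝ^N`, in the cone of positive,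
radially nondecreasing functions; `v'` is its derivative on `[0,1]`. -/
def IsRadialNeumannSol (N : ℕ) (p q : ℝ) (v v' : ℝ → ℝ) : Prop :=
  (∀ r ∈ Set.Icc (0:ℝ) 1, HasDerivWithinAt v (v' r) (Set.Icc (0:ℝ) 1) r) ∧
  ContinuousOn v' (Set.Icc (0:ℝ) 1) ∧
  (∀ r ∈ Set.Icc (0:ℝ) 1, 0 < v r) ∧
  MonotoneOn v (Set.Icc (0:ℝ) 1) ∧
  (∀ r ∈ Set.Icc (0:ℝ) 1, 0 ≤ v' r) ∧
  v' 0 = 0 ∧ v' 1 = 0 ∧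
  (∀ r ∈ Set.Ioo (0:ℝ) 1,
    HasDerivAt (fun s => s ^ (N - 1) * v' s ^ (p - 1))
      (r ^ (N - 1) * (v r ^ (p - 1) - v r ^ (q - 1))) r)

theorem Real.rpow_sub_one_mul_self {x y : ℝ} (hx : 0 ≤ x) (hy : y ≠ 0) :
    x ^ (y - 1) * x = x ^ y := by
  rw [← rpow_add_one' hx (by simpa using hy), sub_add_cancel]

section WeightedIntegral

variable {N : ℕ} {b : ℝ} {f g : ℝ → ℝ}

theorem integral_pow_pred_mul_const (hN : 1 ≤ N) (c : ℝ) :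
    ∫ s in (0:ℝ)..b, s ^ (N - 1) * c = c * b ^ N / N := by
  rw [integral_mul_const, integral_pow, Nat.sub_add_cancel hN, zero_pow (by omega),
    Nat.cast_sub hN]
  ring

theorem intervalIntegrable_pow_pred_mul (hb : 0 ≤ b) (hf : ContinuousOn f (Icc 0 b)) :
    IntervalIntegrable (fun s => s ^ (N - 1) * f s) MeasureTheory.volume 0 b :=
  ((continuousOn_pow _).mul hf).intervalIntegrable_of_Icc hb

theorem integral_pow_pred_mul_mono (hb : 0 ≤ b) (hf : ContinuousOn f (Icc 0 b))
    (hg : ContinuousOn g (Icc 0 b)) (hfg : ∀ s ∈ Icc 0 b, f s ≤ g s) :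
    ∫ s in (0:ℝ)..b, s ^ (N - 1) * f s ≤ ∫ s in (0:ℝ)..b, s ^ (N - 1) * g s :=
  integral_mono_on hb (intervalIntegrable_pow_pred_mul hb hf)
    (intervalIntegrable_pow_pred_mul hb hg)
    fun s hs => mul_le_mul_of_nonneg_left (hfg s hs) (pow_nonneg hs.1 _)

theorem integral_pow_pred_mul_rpow (hN : 1 ≤ N) {a c : ℝ} (ha : 0 ≤ a) (hc : 0 ≤ c) :
    ∫ s in (0:ℝ)..1, s ^ (N - 1) * (a * s) ^ c = a ^ c / (N + c) := by
  have hN' : (0:ℝ) ≤ N - 1 := by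
    rw [sub_nonneg]
    exact_mod_cast hN
  have hexp : ∀ s ∈ uIcc (0:ℝ) 1, s ^ (N - 1) * (a * s) ^ c = a ^ c * s ^ ((N:ℝ) - 1 + c) := by
    intro s hs
    rw [uIcc_of_le zero_le_one] at hs
    rw [mul_rpow ha hs.1, rpow_add_of_nonneg hs.1 hN' hc, ← Nat.cast_pred hN, rpow_natCast]
    ring
  rw [integral_congr hexp, integral_const_mul, integral_rpow (Or.inl (by linarith)),
    zero_rpow (by linarith), one_rpow]
  ring

end WeightedIntegral

noncomputable def radialEnergy (N : ℕ) (p q : ℝ) (v v' : ℝ → ℝ) : ℝ :=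
  ∫ r in (0:ℝ)..1, r ^ (N - 1) * (v' r ^ p / p + v r ^ p / p - v r ^ q / q)

namespace IsRadialNeumannSol

variable {N : ℕ} {p q : ℝ} {v v' : ℝ → ℝ}

theorem pos (hs : IsRadialNeumannSol N p q v v') {r : ℝ} (hr : r ∈ Icc 0 1) : 0 < v r :=
  hs.2.2.1 r hr

theorem le_endpoint (hs : IsRadialNeumannSol N p q v v') {r : ℝ} (hr : r ∈ Icc 0 1) :
    v r ≤ v 1 :=
  hs.2.2.2.1 hr (right_mem_Icc.2 zero_le_one) hr.2

theorem hasDerivWithinAt (hs : IsRadialNeumannSol N p q v v') {r : ℝ} (hr : r ∈ Icc 0 1) :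
    HasDerivWithinAt v (v' r) (Icc 0 1) r :=
  hs.1 r hr

theorem deriv_nonneg (hs : IsRadialNeumannSol N p q v v') {r : ℝ} (hr : r ∈ Icc 0 1) :
    0 ≤ v' r :=
  hs.2.2.2.2.1 r hr

theorem continuousOn (hs : IsRadialNeumannSol N p q v v') : ContinuousOn v (Icc 0 1) :=
  fun _ hr => (hs.hasDerivWithinAt hr).continuousWithinAt

theorem hasDerivAt (hs : IsRadialNeumannSol N p q v v') {r : ℝ} (hr : r ∈ Ioo 0 1) :
    HasDerivAt v (v' r) r :=
  (hs.hasDerivWithinAt (Ioo_subset_Icc_self hr)).hasDerivAt (Icc_mem_nhds hr.1 hr.2)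

theorem continuousOn_rpow (hs : IsRadialNeumannSol N p q v v') (c : ℝ) :
    ContinuousOn (fun r => v r ^ c) (Icc 0 1) :=
  hs.continuousOn.rpow_const fun _ hr => Or.inl (hs.pos hr).ne'

theorem continuousOn_deriv_rpow (hs : IsRadialNeumannSol N p q v v') {c : ℝ} (hc : 0 ≤ c) :
    ContinuousOn (fun r => v' r ^ c) (Icc 0 1) :=
  hs.2.1.rpow_const fun _ _ => Or.inr hc

theorem deriv_left (hs : IsRadialNeumannSol N p q v v') : v' 0 = 0 := hs.2.2.2.2.2.1

theorem deriv_right (hs : IsRadialNeumannSol N p q v v') : v' 1 = 0 := hs.2.2.2.2.2.2.1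

theorem hasDerivAt_flux (hs : IsRadialNeumannSol N p q v v') {r : ℝ} (hr : r ∈ Ioo 0 1) :
    HasDerivAt (fun s => s ^ (N - 1) * v' s ^ (p - 1))
      (r ^ (N - 1) * (v r ^ (p - 1) - v r ^ (q - 1))) r :=
  hs.2.2.2.2.2.2.2 r hr

theorem integral_eq_flux (hp : 1 < p) (hs : IsRadialNeumannSol N p q v v') {r : ℝ}
    (hr : r ∈ Icc (0:ℝ) 1) :
    ∫ s in (0:ℝ)..r, s ^ (N - 1) * (v s ^ (p - 1) - v s ^ (q - 1))
      = r ^ (N - 1) * v' r ^ (p - 1) := by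
  have hsub : Icc 0 r ⊆ Icc 0 1 := Icc_subset_Icc_right hr.2
  rw [integral_eq_sub_of_hasDeriv_right_of_le hr.1
    (((continuousOn_pow _).mul (hs.continuousOn_deriv_rpow (by linarith))).mono hsub)
    (fun x hx => (hs.hasDerivAt_flux ⟨hx.1, hx.2.trans_le hr.2⟩).hasDerivWithinAt)
    (intervalIntegrable_pow_pred_mul hr.1
      (((hs.continuousOn_rpow _).sub (hs.continuousOn_rpow _)).mono hsub))]
  simp [hs.deriv_left, zero_rpow (by linarith : p - 1 ≠ 0)]

theorem integral_flux_eq_zero (hp : 1 < p) (hs : IsRadialNeumannSol N p q v v') :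
    ∫ s in (0:ℝ)..1, s ^ (N - 1) * (v s ^ (p - 1) - v s ^ (q - 1)) = 0 := by
  rw [hs.integral_eq_flux hp (right_mem_Icc.2 zero_le_one), hs.deriv_right,
    zero_rpow (by linarith), mul_zero]

theorem integral_rpow_pred_eq (hp : 1 < p) (hs : IsRadialNeumannSol N p q v v') :
    ∫ s in (0:ℝ)..1, s ^ (N - 1) * v s ^ (q - 1)
      = ∫ s in (0:ℝ)..1, s ^ (N - 1) * v s ^ (p - 1) := by
  have h := hs.integral_flux_eq_zero hp
  simp_rw [mul_sub] at h
  rw [integral_sub (intervalIntegrable_pow_pred_mul zero_le_one (hs.continuousOn_rpow _))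
    (intervalIntegrable_pow_pred_mul zero_le_one (hs.continuousOn_rpow _))] at h
  linarith

theorem one_le_endpoint (hp : 1 < p) (hpq : p < q) (hs : IsRadialNeumannSol N p q v v') :
    1 ≤ v 1 := by
  by_contra! hlt
  refine (hs.integral_flux_eq_zero hp).not_gt (intervalIntegral_pos_of_pos_on
    (intervalIntegrable_pow_pred_mul zero_le_one
      ((hs.continuousOn_rpow _).sub (hs.continuousOn_rpow _))) (fun s hs' => ?_) zero_lt_one)
  have hsI : s ∈ Icc (0:ℝ) 1 := Ioo_subset_Icc_self hs'
  have hv1 : v s < 1 := (hs.le_endpoint hsI).trans_lt hlt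
  exact mul_pos (pow_pos hs'.1 _) (sub_pos.2
    (rpow_lt_rpow_of_exponent_gt (hs.pos hsI) hv1 (by linarith)))

theorem integral_nehari_eq_zero (hp : 1 < p) (hpq : p < q) (hs : IsRadialNeumannSol N p q v v') :
    ∫ s in (0:ℝ)..1, s ^ (N - 1) * (v' s ^ p + v s ^ p - v s ^ q) = 0 := by
  have hderiv : ∀ x ∈ Ioo (0:ℝ) 1, HasDerivAt (fun s => s ^ (N - 1) * v' s ^ (p - 1) * v s)
      (x ^ (N - 1) * (v' x ^ p + v x ^ p - v x ^ q)) x := by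
    intro x hx
    have hxI : x ∈ Icc (0:ℝ) 1 := Ioo_subset_Icc_self hx
    refine ((hs.hasDerivAt_flux hx).mul (hs.hasDerivAt hx)).congr_deriv ?_
    rw [← rpow_sub_one_mul_self (hs.deriv_nonneg hxI) (by linarith : p ≠ 0),
      ← rpow_sub_one_mul_self (hs.pos hxI).le (by linarith : p ≠ 0),
      ← rpow_sub_one_mul_self (hs.pos hxI).le (by linarith : q ≠ 0)]
    ring
  rw [integral_eq_sub_of_hasDeriv_right_of_le zero_le_one
    (((continuousOn_pow _).mul (hs.continuousOn_deriv_rpow (by linarith))).mul hs.continuousOn)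
    (fun x hx => (hderiv x hx).hasDerivWithinAt)
    (intervalIntegrable_pow_pred_mul zero_le_one (((hs.continuousOn_deriv_rpow
      (by linarith)).add (hs.continuousOn_rpow _)).sub (hs.continuousOn_rpow _)))]
  simp [hs.deriv_left, hs.deriv_right, zero_rpow (by linarith : p - 1 ≠ 0)]

theorem radialEnergy_eq (hp : 1 < p) (hpq : p < q) (hs : IsRadialNeumannSol N p q v v') :
    radialEnergy N p q v v' = (1 / p - 1 / q) * ∫ s in (0:ℝ)..1, s ^ (N - 1) * v s ^ q := by
  have hsplit : ∀ s : ℝ, s ^ (N - 1) * (v' s ^ p / p + v s ^ p / p - v s ^ q / q)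
      = 1 / p * (s ^ (N - 1) * (v' s ^ p + v s ^ p - v s ^ q))
        + (1 / p - 1 / q) * (s ^ (N - 1) * v s ^ q) := fun s => by ring
  have hint : IntervalIntegrable (fun s => s ^ (N - 1) * (v' s ^ p + v s ^ p - v s ^ q))
      MeasureTheory.volume 0 1 :=
    intervalIntegrable_pow_pred_mul zero_le_one
      (((hs.continuousOn_deriv_rpow (by linarith)).add (hs.continuousOn_rpow _)).sub
        (hs.continuousOn_rpow _))
  rw [radialEnergy, integral_congr fun s _ => hsplit s, integral_add (hint.const_mul _)
      ((intervalIntegrable_pow_pred_mul zero_le_one (hs.continuousOn_rpow _)).const_mul _),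
    integral_const_mul, integral_const_mul, hs.integral_nehari_eq_zero hp hpq, mul_zero, zero_add]

theorem integral_rpow_le (hN : 1 ≤ N) (hs : IsRadialNeumannSol N p q v v') {c : ℝ} (hc : 0 ≤ c) :
    ∫ s in (0:ℝ)..1, s ^ (N - 1) * v s ^ c ≤ v 1 ^ c / N :=
  calc ∫ s in (0:ℝ)..1, s ^ (N - 1) * v s ^ c ≤ ∫ s in (0:ℝ)..1, s ^ (N - 1) * v 1 ^ c :=
        integral_pow_pred_mul_mono zero_le_one (hs.continuousOn_rpow c) continuousOn_const
          fun s hs' => rpow_le_rpow (hs.pos hs').le (hs.le_endpoint hs') hc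
    _ = v 1 ^ c / N := by rw [integral_pow_pred_mul_const hN, one_pow, mul_one]

theorem integral_rpow_exponent_le (hN : 1 ≤ N) (hp : 1 < p) (hpq : p < q)
    (hs : IsRadialNeumannSol N p q v v') :
    ∫ s in (0:ℝ)..1, s ^ (N - 1) * v s ^ q ≤ v 1 ^ p / N := by
  have hv1 : 0 < v 1 := hs.pos (right_mem_Icc.2 zero_le_one)
  calc ∫ s in (0:ℝ)..1, s ^ (N - 1) * v s ^ q
      ≤ ∫ s in (0:ℝ)..1, s ^ (N - 1) * (v s ^ (q - 1) * v 1) :=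
        integral_pow_pred_mul_mono zero_le_one (hs.continuousOn_rpow q)
          ((hs.continuousOn_rpow _).mul continuousOn_const) fun s hs' => by
            rw [← rpow_sub_one_mul_self (hs.pos hs').le (by linarith : q ≠ 0)]
            exact mul_le_mul_of_nonneg_left (hs.le_endpoint hs') (rpow_nonneg (hs.pos hs').le _)
    _ = (∫ s in (0:ℝ)..1, s ^ (N - 1) * v s ^ (p - 1)) * v 1 := by
        simp_rw [← mul_assoc]
        rw [integral_mul_const, hs.integral_rpow_pred_eq hp]
    _ ≤ v 1 ^ (p - 1) / N * v 1 :=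
        mul_le_mul_of_nonneg_right (hs.integral_rpow_le hN (by linarith)) hv1.le
    _ = v 1 ^ p / N := by
        rw [div_mul_eq_mul_div, rpow_sub_one_mul_self hv1.le (by linarith : p ≠ 0)]

theorem radialEnergy_le (hN : 1 ≤ N) (hp : 1 < p) (hpq : p < q)
    (hs : IsRadialNeumannSol N p q v v') :
    radialEnergy N p q v v' ≤ (1 / p - 1 / q) * (v 1 ^ p / N) := by
  rw [hs.radialEnergy_eq hp hpq]
  exact mul_le_mul_of_nonneg_left (hs.integral_rpow_exponent_le hN hp hpq)
    (sub_nonneg.2 (one_div_le_one_div_of_le (by linarith) hpq.le))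

theorem deriv_le_endpoint (hN : 1 ≤ N) (hp : 1 < p) (hs : IsRadialNeumannSol N p q v v') {r : ℝ}
    (hr : r ∈ Icc (0:ℝ) 1) : v' r ≤ v 1 := by
  have hv1 : 0 < v 1 := hs.pos (right_mem_Icc.2 zero_le_one)
  rcases hr.1.eq_or_lt with rfl | hr0
  · rw [hs.deriv_left]
    exact hv1.le
  have hsub : Icc 0 r ⊆ Icc 0 1 := Icc_subset_Icc_right hr.2
  have hflux : r ^ (N - 1) * v' r ^ (p - 1) ≤ r ^ (N - 1) * v 1 ^ (p - 1) :=
    calc r ^ (N - 1) * v' r ^ (p - 1)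
        = ∫ s in (0:ℝ)..r, s ^ (N - 1) * (v s ^ (p - 1) - v s ^ (q - 1)) :=
          (hs.integral_eq_flux hp hr).symm
      _ ≤ ∫ s in (0:ℝ)..r, s ^ (N - 1) * v 1 ^ (p - 1) :=
          integral_pow_pred_mul_mono hr.1
            (((hs.continuousOn_rpow _).sub (hs.continuousOn_rpow _)).mono hsub)
            continuousOn_const fun s hs' => by
              have hsI := hsub hs'
              have := rpow_le_rpow (hs.pos hsI).le (hs.le_endpoint hsI) (by linarith : 0 ≤ p - 1)
              have := rpow_nonneg (hs.pos hsI).le (q - 1)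
              linarith
      _ = v 1 ^ (p - 1) * (r ^ N / N) := by
          rw [integral_pow_pred_mul_const hN]
          ring
      _ ≤ v 1 ^ (p - 1) * r ^ (N - 1) := by
          refine mul_le_mul_of_nonneg_left ?_ (rpow_nonneg hv1.le _)
          calc r ^ N / N ≤ r ^ N := div_le_self (pow_nonneg hr.1 _) (by exact_mod_cast hN)
            _ ≤ r ^ (N - 1) := pow_le_pow_of_le_one hr.1 hr.2 (Nat.sub_le N 1)
      _ = r ^ (N - 1) * v 1 ^ (p - 1) := mul_comm _ _
  exact (rpow_le_rpow_iff (hs.deriv_nonneg hr) hv1.le (by linarith)).1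
    (le_of_mul_le_mul_left hflux (pow_pos hr0 _))

theorem endpoint_mul_le (hN : 1 ≤ N) (hp : 1 < p) (hs : IsRadialNeumannSol N p q v v') {r : ℝ}
    (hr : r ∈ Icc (0:ℝ) 1) : v 1 * r ≤ v r := by
  have h := (convex_Icc (0:ℝ) 1).norm_image_sub_le_of_norm_hasDerivWithin_le
    (fun _ hx => hs.hasDerivWithinAt hx)
    (fun x hx => (norm_of_nonneg (hs.deriv_nonneg hx)).trans_le (hs.deriv_le_endpoint hN hp hx))
    hr (right_mem_Icc.2 zero_le_one)
  rw [Real.norm_eq_abs, Real.norm_eq_abs, abs_of_nonneg (sub_nonneg.2 hr.2)] at h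
  linarith [le_abs_self (v 1 - v r)]

theorem endpoint_rpow_le (hN : 1 ≤ N) (hp : 1 < p) (hpq : p < q)
    (hs : IsRadialNeumannSol N p q v v') : v 1 ^ (q - p) ≤ (N + q - 1) / N := by
  have hv1 : 0 < v 1 := hs.pos (right_mem_Icc.2 zero_le_one)
  have hN0 : (0:ℝ) < N := by exact_mod_cast hN
  have hbound : v 1 ^ (q - 1) / (N + (q - 1)) ≤ v 1 ^ (p - 1) / N :=
    calc v 1 ^ (q - 1) / (N + (q - 1))
        = ∫ s in (0:ℝ)..1, s ^ (N - 1) * (v 1 * s) ^ (q - 1) :=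
          (integral_pow_pred_mul_rpow hN hv1.le (by linarith)).symm
      _ ≤ ∫ s in (0:ℝ)..1, s ^ (N - 1) * v s ^ (q - 1) :=
          integral_pow_pred_mul_mono zero_le_one
            ((continuousOn_const.mul continuousOn_id).rpow_const fun _ _ => Or.inr (by linarith))
            (hs.continuousOn_rpow _) fun s hs' =>
              rpow_le_rpow (mul_nonneg hv1.le hs'.1) (hs.endpoint_mul_le hN hp hs') (by linarith)
      _ = ∫ s in (0:ℝ)..1, s ^ (N - 1) * v s ^ (p - 1) := hs.integral_rpow_pred_eq hp
      _ ≤ v 1 ^ (p - 1) / N := hs.integral_rpow_le hN (by linarith)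
  rw [div_le_div_iff₀ (by linarith) hN0] at hbound
  rw [show q - p = (q - 1) - (p - 1) by ring, rpow_sub hv1, div_le_iff₀ (rpow_pos_of_pos hv1 _),
    div_mul_eq_mul_div, le_div_iff₀ hN0]
  linarith

theorem endpoint_le (hN : 1 ≤ N) (hp : 1 < p) (hpq : p < q)
    (hs : IsRadialNeumannSol N p q v v') : v 1 ≤ q ^ (q - p)⁻¹ := by
  have hN1 : (1:ℝ) ≤ N := by exact_mod_cast hN
  rw [le_rpow_inv_iff_of_pos (hs.pos (right_mem_Icc.2 zero_le_one)).le (by linarith)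
    (sub_pos.2 hpq)]
  calc v 1 ^ (q - p) ≤ (N + q - 1) / N := hs.endpoint_rpow_le hN hp hpq
    _ ≤ q := by
      rw [div_le_iff₀ (by linarith)]
      nlinarith

end IsRadialNeumannSol

theorem tendsto_endpoint_one {N : ℕ} (hN : 1 ≤ N) {p : ℝ} (hp : 1 < p) {q : ℕ → ℝ}
    (hq : ∀ n, p < q n) (hqtop : Tendsto q atTop atTop) {v v' : ℕ → ℝ → ℝ}
    (hsol : ∀ n, IsRadialNeumannSol N p (q n) (v n) (v' n)) :
    Tendsto (fun n => v n 1) atTop (nhds 1) := by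
  have hupper : Tendsto (fun n => q n ^ (q n - p)⁻¹) atTop (nhds 1) :=
    ((tendsto_rpow_div_mul_add 1 1 (-p) zero_ne_one).comp hqtop).congr fun n => by
      simp [sub_eq_add_neg]
  exact tendsto_of_tendsto_of_tendsto_of_le_of_le tendsto_const_nhds hupper
    (fun n => (hsol n).one_le_endpoint hp (hq n)) (fun n => (hsol n).endpoint_le hN hp (hq n))

theorem energy_levels_tendsto_general
    (N : ℕ) (hN : 1 ≤ N) (p : ℝ) (hp1 : 1 < p)
    (q : ℕ → ℝ) (hq : ∀ n, p < q n) (hqtop : Tendsto q atTop atTop)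
    (v v' : ℕ → ℝ → ℝ)
    (hsol : ∀ n, IsRadialNeumannSol N p (q n) (v n) (v' n))
    (hE : ∀ n, (1 / p - 1 / q n) * (1 / (N : ℝ)) <
      ∫ r in (0:ℝ)..1, r ^ (N - 1) *
        (v' n r ^ p / p + v n r ^ p / p - v n r ^ q n / q n)) :
    Tendsto (fun n => ∫ r in (0:ℝ)..1, r ^ (N - 1) *
        (v' n r ^ p / p + v n r ^ p / p - v n r ^ q n / q n))
      atTop (nhds (1 / (p * (N : ℝ)))) := by
  have hinv : Tendsto (fun n => 1 / q n) atTop (nhds 0) := tendsto_const_nhds.div_atTop hqtop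
  have hlim : ∀ a : ℕ → ℝ, Tendsto a atTop (nhds 1) →
      Tendsto (fun n => (1 / p - 1 / q n) * (a n ^ p / N)) atTop (nhds (1 / (p * N))) := by
    intro a ha
    have := ((tendsto_const_nhds (x := 1 / p)).sub hinv).mul
      ((ha.rpow_const (p := p) (Or.inl one_ne_zero)).div_const (N : ℝ))
    rwa [sub_zero, one_rpow, one_div_mul_one_div] at this
  refine tendsto_of_tendsto_of_tendsto_of_le_of_le ?_
    (hlim _ (tendsto_endpoint_one hN hp1 hq hqtop hsol)) (fun n => (hE n).le)
    (fun n => (hsol n).radialEnergy_le hN hp1 (hq n))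
  simpa using hlim (fun _ => 1) tendsto_const_nhds

/-- Convergence of the energy levels of the high-energy solutions:
`E_{q_n}(v_n) → 1/(pN)` as `q_n → ∞`. -/
theorem energy_levels_tendsto
    (N : ℕ) (hN : 1 ≤ N) (p : ℝ) (hp1 : 1 < p) (hp2 : p < 2)
    (q : ℕ → ℝ) (hq : ∀ n, p < q n) (hqtop : Tendsto q atTop atTop)
    (v v' : ℕ → ℝ → ℝ)
    (hsol : ∀ n, IsRadialNeumannSol N p (q n) (v n) (v' n))
    (hE : ∀ n, (1 / p - 1 / q n) * (1 / (N : ℝ)) <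
      ∫ r in (0:ℝ)..1, r ^ (N - 1) *
        (v' n r ^ p / p + v n r ^ p / p - v n r ^ q n / q n)) :
    Tendsto (fun n => ∫ r in (0:ℝ)..1, r ^ (N - 1) *
        (v' n r ^ p / p + v n r ^ p / p - v n r ^ q n / q n))
      atTop (nhds (1 / (p * (N : ℝ)))) :=
  energy_levels_tendsto_general N hN p hp1 q hq hqtop v v' hsol hE
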